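/- Let m ≥ 3, n = 2m, and let a, b : Fin m → Fin n be injective maps with disjoint ranges covering Fin n (write i_l = a(l), j_l = b(l)). Consider the projection π sending x : Fin n → Fin n → ℝ to the vector of its entries x(u,v) over pairs u < v. Then the fence inequality f(x) ≤ 1 defines a facet of the projected linear ordering polytope π(P_n): namely, f(χ_r) ≤ 1 for every strict total order r on Fin n, and the affine span of the set { π(χ_r) : r a strict total order on Fin n with f(χ_r) = 1 } has dimension n(n−1)/2 − 1, where f(x) = 2·∑_{l} x(i_l, j_l) − ∑_{l} ∑_{q} x(i_l, j_q). -/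

import Mathlib

open scoped BigOperators

/-- A point of the linear ordering polytope relaxation `B_n`. -/
def IsBn {n : ℕ} (x : Fin n → Fin n → ℝ) : Prop :=
  (∀ i, x i i = 0) ∧
  (∀ i j : Fin n, i ≠ j → 0 ≤ x i j ∧ x i j ≤ 1) ∧
  (∀ i j : Fin n, i ≠ j → x i j + x j i = 1) ∧
  (∀ i j k : Fin n, i ≠ j → i ≠ k → j ≠ k →
    0 ≤ x i j + x j k - x i k ∧ x i j + x j k - x i k ≤ 1)

/-- A strict total order on `Fin n`: irreflexive, transitive and total. -/
def IsSTO {n : ℕ} (r : Fin n → Fin n → Prop) : Prop :=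
  (∀ i, ¬ r i i) ∧ (∀ i j k, r i j → r j k → r i k) ∧
  (∀ i j : Fin n, i ≠ j → r i j ∨ r j i)

open Classical in
/-- The incidence vector `χ_r` of a relation `r`. -/
noncomputable def chi {n : ℕ} (r : Fin n → Fin n → Prop) : Fin n → Fin n → ℝ :=
  fun i j => if r i j then 1 else 0

/-- The fence function `f(x) = 2·∑ l, x(a l, b l) − ∑ l, ∑ q, x(a l, b q)`. -/
noncomputable def fence {m n : ℕ} (a b : Fin m → Fin n)
    (x : Fin n → Fin n → ℝ) : ℝ :=
  2 * ∑ l, x (a l) (b l) - ∑ l, ∑ q, x (a l) (b q)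

/-- The projection of a matrix onto its entries over pairs `u < v`. -/
def proj {n : ℕ} (x : Fin n → Fin n → ℝ) :
    {p : Fin n × Fin n // p.1 < p.2} → ℝ :=
  fun p => x p.1.1 p.1.2

/-!
Validity: let `b l₀` be the `r`-last of the `b`'s. Row `l` of the fence sum is
`2 χ(a l, b l) - ∑ q, χ(a l, b q)`; for `l ≠ l₀` it is `≤ χ(a l, b l) - χ(a l, b l₀) ≤ 0`,
since `a l` before `b l` forces `a l` before `b l₀`, and row `l₀` is at most `1`.

Facet: the fence is a linear functional of `x`, and on incidence vectors of strict total orders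
`x` is an affine function of `π x`, so the projected tight points lie in an affine hyperplane.
Conversely, label the ground set by `Fin m ⊕ Fin m` (`a l ↔ inl l`, `b q ↔ inr q`) and give
every coordinate pair `{u, v}` except `{a d, b d}` a pair of tight orders that disagree on
`{u, v}` but agree on every other pair of equal or higher level, the levels being: `{a l, b q}`
with `l ≠ q`, then `{a l, b l}`, then pairs on one side. The differences of their projections
form a triangular, hence linearly independent, family of `n(n-1)/2 - 1` vectors in the
direction of the tight points. Same-side pairs are handled by swapping two adjacent elements
of a tight order, mixed pairs by comparing the tight orders `b… a_l b_l a…` and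
`b… a_l b_l a_q b_q a…` (for `q ≠ l`) or `b… a_d b_d a…` (for `q = l`). An adjacent same-side
pair `a_l a_q` contributes nothing to the fence, so a third index `t` with `a_t` before `b_t`
is needed to make the order tight; this is where `m ≥ 3` enters.
-/

theorem linearIndependent_of_triangular {ι R M : Type*} [Ring R] [NoZeroDivisors R]
    [AddCommGroup M] [Module R M] {v : ι → M} (φ : ι → M →ₗ[R] R) (h : ι → ℕ)
    (hdiag : ∀ i, φ i (v i) ≠ 0) (htri : ∀ i j, i ≠ j → h i ≤ h j → φ i (v j) = 0) :
    LinearIndependent R v := by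
  classical
  rw [linearIndependent_iff']
  intro s g hg i
  induction hk : h i using Nat.strong_induction_on generalizing i with
  | _ k ih =>
    intro hi
    have hφ := congrArg (φ i) hg
    rw [map_sum, map_zero, Finset.sum_eq_single i] at hφ
    · simpa [hdiag i] using hφ
    · intro j hj hji
      rcases lt_or_ge (h j) k with hlt | hle
      · simp [ih (h j) hlt j rfl hj]
      · simp [htri i j hji.symm (hk ▸ hle)]
    · exact absurd hi

theorem Fin.exists_ne_ne {m : ℕ} (hm : 3 ≤ m) (l q : Fin m) : ∃ t, t ≠ l ∧ t ≠ q := by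
  have hcard : ({l, q} : Finset (Fin m)).card < (Finset.univ : Finset (Fin m)).card := by
    simpa using Finset.card_le_two.trans_lt (by omega : 2 < m)
  obtain ⟨t, -, ht⟩ := Finset.exists_mem_notMem_of_card_lt_card hcard
  simp only [Finset.mem_insert, Finset.mem_singleton, not_or] at ht
  exact ⟨t, ht⟩

theorem Fin.card_subtype_fst_lt_snd (n : ℕ) :
    Fintype.card {p : Fin n × Fin n // p.1 < p.2} = n * (n - 1) / 2 := by
  rw [Fintype.card_subtype, Fintype.card_product_filter_lt, Fintype.card_fin,
    Nat.choose_two_right]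

section Orders

variable {n : ℕ}

theorem IsSTO.exists_max_image {ι : Type*} [Finite ι] [Nonempty ι] {r : Fin n → Fin n → Prop}
    (hr : IsSTO r) (f : ι → Fin n) : ∃ i₀, ∀ i, f i = f i₀ ∨ r (f i) (f i₀) := by
  obtain ⟨hirr, htr, htot⟩ := hr
  let s : ι → ι → Prop := fun i j => r (f j) (f i)
  have : IsTrans ι s := ⟨fun i j k hij hjk => htr _ _ _ hjk hij⟩
  have : Std.Irrefl s := ⟨fun i => hirr (f i)⟩
  obtain ⟨i₀, -, hi₀⟩ := (Finite.wellFounded_of_trans_of_irrefl s).has_min Set.univ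
    ⟨Classical.arbitrary ι, trivial⟩
  refine ⟨i₀, fun i => ?_⟩
  by_cases h : f i = f i₀
  · exact Or.inl h
  · exact Or.inr ((htot _ _ h).resolve_right (hi₀ i trivial))

theorem chi_nonneg (r : Fin n → Fin n → Prop) (u v : Fin n) : 0 ≤ chi r u v := by
  unfold chi; split_ifs <;> norm_num

theorem chi_le_one (r : Fin n → Fin n → Prop) (u v : Fin n) : chi r u v ≤ 1 := by
  unfold chi; split_ifs <;> norm_num

theorem chi_le_chi {r r' : Fin n → Fin n → Prop} {u v u' v' : Fin n}
    (h : r u v → r' u' v') : chi r u v ≤ chi r' u' v' := by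
  unfold chi; split_ifs with h₁ h₂ <;> first | exact absurd (h h₁) h₂ | norm_num

theorem chi_eq_chi_iff {r r' : Fin n → Fin n → Prop} {u v : Fin n} :
    chi r u v = chi r' u v ↔ (r u v ↔ r' u v) := by
  unfold chi; split_ifs <;> simp_all

theorem chi_swap {r : Fin n → Fin n → Prop} (hr : IsSTO r) {u v : Fin n} (huv : u ≠ v) :
    chi r v u = 1 - chi r u v := by
  obtain ⟨hirr, htr, htot⟩ := hr
  unfold chi
  by_cases h : r u v
  · simp [h, show ¬r v u from fun h' => hirr u (htr _ _ _ h h')]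
  · simp [h, (htot u v huv).resolve_left h]

theorem fence_chi_le_one {m : ℕ} (a b : Fin m → Fin n) {r : Fin n → Fin n → Prop}
    (hr : IsSTO r) : fence a b (chi r) ≤ 1 := by
  rcases isEmpty_or_nonempty (Fin m) with hm | hm
  · simp [fence]
  obtain ⟨l₀, hl₀⟩ := hr.exists_max_image b
  have hrow : ∀ l, 2 * chi r (a l) (b l) - ∑ q, chi r (a l) (b q) ≤ if l = l₀ then 1 else 0 := by
    intro l
    split_ifs with hl
    · have := Finset.single_le_sum (fun q _ => chi_nonneg r (a l) (b q)) (Finset.mem_univ l)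
      linarith [chi_le_one r (a l) (b l)]
    · have hpair := Finset.sum_le_sum_of_subset_of_nonneg (Finset.subset_univ {l, l₀})
        fun q _ _ => chi_nonneg r (a l) (b q)
      rw [Finset.sum_pair hl] at hpair
      have hmono : chi r (a l) (b l) ≤ chi r (a l) (b l₀) := chi_le_chi fun h =>
        (hl₀ l).elim (fun he => he ▸ h) (hr.2.1 _ _ _ h)
      linarith
  calc fence a b (chi r) = ∑ l, (2 * chi r (a l) (b l) - ∑ q, chi r (a l) (b q)) := by
        simp only [fence, Finset.sum_sub_distrib, Finset.mul_sum]
    _ ≤ ∑ l, if l = l₀ then (1 : ℝ) else 0 := Finset.sum_le_sum fun l _ => hrow l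
    _ = 1 := by simp

end Orders

section Projection

variable {n : ℕ}

def skewLift : ({p : Fin n × Fin n // p.1 < p.2} → ℝ) →ₗ[ℝ] (Fin n → Fin n → ℝ) where
  toFun y u v :=
    if h : u < v then y ⟨(u, v), h⟩ else if h : v < u then -y ⟨(v, u), h⟩ else 0
  map_add' y z := by
    ext u v; simp only [Pi.add_apply]; split_ifs <;> ring
  map_smul' c y := by
    ext u v; simp only [Pi.smul_apply, smul_eq_mul, RingHom.id_apply]; split_ifs <;> ring

theorem skewLift_proj_chi {r : Fin n → Fin n → Prop} (hr : IsSTO r) :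
    skewLift (proj (chi r)) = chi r - chi (fun u v => v < u) := by
  ext u v
  simp only [skewLift, LinearMap.coe_mk, AddHom.coe_mk, proj, Pi.sub_apply]
  rcases lt_trichotomy u v with huv | rfl | hvu
  · simp [huv, chi, not_lt.mpr huv.le]
  · simp [chi, hr.1]
  · rw [dif_neg (not_lt.mpr hvu.le), dif_pos hvu, chi_swap hr hvu.ne]
    simp [chi, hvu]

theorem vectorSpan_le_ker (F : (Fin n → Fin n → ℝ) →ₗ[ℝ] ℝ) (c : ℝ) :
    vectorSpan ℝ {y | ∃ r, IsSTO r ∧ F (chi r) = c ∧ y = proj (chi r)} ≤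
      LinearMap.ker (F ∘ₗ skewLift) := by
  rw [vectorSpan_def, Submodule.span_le]
  rintro _ ⟨_, ⟨r₁, hr₁, hF₁, rfl⟩, _, ⟨r₂, hr₂, hF₂, rfl⟩, rfl⟩
  simp [skewLift_proj_chi hr₁, skewLift_proj_chi hr₂, hF₁, hF₂]

end Projection

section Fence

variable {m n : ℕ}

noncomputable def fenceLinear (a b : Fin m → Fin n) : (Fin n → Fin n → ℝ) →ₗ[ℝ] ℝ where
  toFun := fence a b
  map_add' x y := by
    simp only [fence, Pi.add_apply, Finset.sum_add_distrib]; ring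
  map_smul' c x := by
    simp only [fence, Pi.smul_apply, smul_eq_mul, ← Finset.mul_sum, RingHom.id_apply]; ring

def fenceTightPoints (a b : Fin m → Fin n) : Set ({p : Fin n × Fin n // p.1 < p.2} → ℝ) :=
  {y | ∃ r, IsSTO r ∧ fence a b (chi r) = 1 ∧ y = proj (chi r)}

end Fence

section Ranked

variable {n : ℕ} {σ : Type*}

def rankOrder (e : σ ≃ Fin n) (ρ : σ → ℕ) : Fin n → Fin n → Prop :=
  fun u v => ρ (e.symm u) < ρ (e.symm v)

theorem isSTO_rankOrder (e : σ ≃ Fin n) {ρ : σ → ℕ} (hρ : Function.Injective ρ) :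
    IsSTO (rankOrder e ρ) :=
  ⟨fun _ => lt_irrefl _, fun _ _ _ => lt_trans,
    fun _ _ h => lt_or_gt_of_ne (hρ.ne (e.symm.injective.ne h))⟩

def SameOrder (ρ₁ ρ₂ : σ → ℕ) (x y : σ) : Prop := ρ₁ x < ρ₁ y ↔ ρ₂ x < ρ₂ y

theorem SameOrder.comm {ρ₁ ρ₂ : σ → ℕ} (h₁ : Function.Injective ρ₁)
    (h₂ : Function.Injective ρ₂) {x y : σ} (hxy : x ≠ y) :
    SameOrder ρ₁ ρ₂ x y ↔ SameOrder ρ₁ ρ₂ y x := by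
  have := h₁.ne hxy; have := h₂.ne hxy
  unfold SameOrder; omega

theorem proj_chi_rankOrder_sub_apply_eq_zero_iff (e : σ ≃ Fin n) (ρ₁ ρ₂ : σ → ℕ)
    (p : {p : Fin n × Fin n // p.1 < p.2}) :
    (proj (chi (rankOrder e ρ₁)) - proj (chi (rankOrder e ρ₂))) p = 0 ↔
      SameOrder ρ₁ ρ₂ (e.symm p.1.1) (e.symm p.1.2) := by
  rw [Pi.sub_apply, sub_eq_zero]
  exact chi_eq_chi_iff

variable [DecidableEq σ]

theorem sameOrder_comp_swap {ρ : σ → ℕ} (hρ : Function.Injective ρ) {u v : σ}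
    (hadj : ρ v = ρ u + 1) {x y : σ} (hne : s(x, y) ≠ s(u, v)) :
    SameOrder ρ (ρ ∘ Equiv.swap u v) x y := by
  have huv : u ≠ v := by rintro rfl; omega
  have key : ∀ w, w = u ∧ ρ (Equiv.swap u v w) = ρ u + 1 ∨ w = v ∧ ρ (Equiv.swap u v w) = ρ u ∨
      ρ (Equiv.swap u v w) = ρ w ∧ ρ w ≠ ρ u ∧ ρ w ≠ ρ u + 1 := by
    intro w
    by_cases hwu : w = u
    · subst hwu; simp [hadj]
    by_cases hwv : w = v
    · subst hwv; simp
    · rw [Equiv.swap_apply_of_ne_of_ne hwu hwv, ← hadj]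
      exact Or.inr (Or.inr ⟨rfl, hρ.ne hwu, hρ.ne hwv⟩)
  unfold SameOrder
  simp only [Function.comp_apply]
  rcases key x with ⟨rfl, hx⟩ | ⟨rfl, hx⟩ | ⟨hx, hx₁, hx₂⟩ <;>
    rcases key y with ⟨rfl, hy⟩ | ⟨rfl, hy⟩ | ⟨hy, hy₁, hy₂⟩ <;>
    first | exact absurd rfl hne | exact absurd Sym2.eq_swap hne | omega

theorem not_sameOrder_comp_swap {ρ : σ → ℕ} (hρ : Function.Injective ρ) {x y : σ}
    (hxy : x ≠ y) : ¬SameOrder ρ (ρ ∘ Equiv.swap x y) x y := by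
  have := hρ.ne hxy
  simp only [SameOrder, Function.comp_apply, Equiv.swap_apply_left, Equiv.swap_apply_right]
  omega

end Ranked

section Ranks

variable {m : ℕ}

/- Ranks of `a l = inl l` and `b q = inr q` in four families of tight orders, listed from first
to last (`b…` and `a…` stand for the remaining `b`'s and `a`'s, in index order):
* `diagRank t`: `b… a_t b_t a…`;
* `offRank t s`: `b… a_t b_t a_s b_s a…`;
* `aSwapRank t l q`: `b… a_t b_t a_l a_q a…`;
* `bSwapRank t l q`: `b… b_l b_q a_t b_t a…`. -/

def diagRank (t : Fin m) : Fin m ⊕ Fin m → ℕ :=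
  Sum.elim (fun l => if l = t then m else m + 2 + l) (fun q => if q = t then m + 1 else q)

def offRank (t s : Fin m) : Fin m ⊕ Fin m → ℕ :=
  Sum.elim (fun l => if l = t then m else if l = s then m + 2 else m + 4 + l)
    (fun q => if q = t then m + 1 else if q = s then m + 3 else q)

def aSwapRank (t l q : Fin m) : Fin m ⊕ Fin m → ℕ :=
  Sum.elim
    (fun x => if x = t then m else if x = l then m + 2 else if x = q then m + 3 else m + 4 + x)
    (fun y => if y = t then m + 1 else y)

def bSwapRank (t l q : Fin m) : Fin m ⊕ Fin m → ℕ :=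
  Sum.elim (fun x => if x = t then m + 2 else m + 4 + x)
    (fun y => if y = t then m + 3 else if y = l then m else if y = q then m + 1 else y)

theorem diagRank_injective (t : Fin m) : Function.Injective (diagRank t) := by
  rintro (x | x) (y | y) h <;> simp only [diagRank, Sum.elim_inl, Sum.elim_inr] at h <;>
    split_ifs at h <;>
    simp only [Fin.ext_iff, Sum.inl.injEq, Sum.inr.injEq, reduceCtorEq] at * <;> omega

theorem offRank_injective (t s : Fin m) : Function.Injective (offRank t s) := by
  rintro (x | x) (y | y) h <;> simp only [offRank, Sum.elim_inl, Sum.elim_inr] at h <;>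
    split_ifs at h <;>
    simp only [Fin.ext_iff, Sum.inl.injEq, Sum.inr.injEq, reduceCtorEq] at * <;> omega

theorem aSwapRank_injective (t l q : Fin m) : Function.Injective (aSwapRank t l q) := by
  rintro (x | x) (y | y) h <;> simp only [aSwapRank, Sum.elim_inl, Sum.elim_inr] at h <;>
    split_ifs at h <;>
    simp only [Fin.ext_iff, Sum.inl.injEq, Sum.inr.injEq, reduceCtorEq] at * <;> omega

theorem bSwapRank_injective (t l q : Fin m) : Function.Injective (bSwapRank t l q) := by
  rintro (x | x) (y | y) h <;> simp only [bSwapRank, Sum.elim_inl, Sum.elim_inr] at h <;>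
    split_ifs at h <;>
    simp only [Fin.ext_iff, Sum.inl.injEq, Sum.inr.injEq, reduceCtorEq] at * <;> omega

theorem diagRank_lt_iff (t l q : Fin m) :
    diagRank t (.inl l) < diagRank t (.inr q) ↔ l = t ∧ q = t := by
  simp only [diagRank, Sum.elim_inl, Sum.elim_inr]
  split_ifs <;> simp only [Fin.ext_iff] at * <;> omega

theorem offRank_lt_iff (t s l q : Fin m) :
    offRank t s (.inl l) < offRank t s (.inr q) ↔ l = t ∧ (q = t ∨ q = s) ∨ l = s ∧ q = s := by
  simp only [offRank, Sum.elim_inl, Sum.elim_inr]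
  split_ifs <;> simp only [Fin.ext_iff] at * <;> omega

theorem aSwapRank_lt_iff (t l' q' l q : Fin m) :
    aSwapRank t l' q' (.inl l) < aSwapRank t l' q' (.inr q) ↔ l = t ∧ q = t := by
  simp only [aSwapRank, Sum.elim_inl, Sum.elim_inr]
  split_ifs <;> simp only [Fin.ext_iff] at * <;> omega

theorem bSwapRank_lt_iff (t l' q' l q : Fin m) :
    bSwapRank t l' q' (.inl l) < bSwapRank t l' q' (.inr q) ↔ l = t ∧ q = t := by
  simp only [bSwapRank, Sum.elim_inl, Sum.elim_inr]
  split_ifs <;> simp only [Fin.ext_iff] at * <;> omega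

variable {t l q : Fin m}

theorem aSwapRank_swap (htl : t ≠ l) (htq : t ≠ q) :
    aSwapRank t q l = aSwapRank t l q ∘ Equiv.swap (.inl l) (.inl q) := by
  funext z
  by_cases hl : z = .inl l
  · subst hl
    obtain rfl | hlq := eq_or_ne l q
    · simp [aSwapRank]
    · simp [aSwapRank, htl.symm, htq.symm, hlq, hlq.symm]
  by_cases hq : z = .inl q
  · subst hq; simp [aSwapRank, htl.symm, htq.symm]
  rw [Function.comp_apply, Equiv.swap_apply_of_ne_of_ne hl hq]
  rcases z with x | y
  · simp only [Sum.inl.injEq] at hl hq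
    simp [aSwapRank, hl, hq]
  · rfl

theorem aSwapRank_adjacent (htl : t ≠ l) (htq : t ≠ q) (hlq : l ≠ q) :
    aSwapRank t l q (.inl q) = aSwapRank t l q (.inl l) + 1 := by
  simp [aSwapRank, htl.symm, htq.symm, hlq.symm]

theorem bSwapRank_swap (htl : t ≠ l) (htq : t ≠ q) :
    bSwapRank t q l = bSwapRank t l q ∘ Equiv.swap (.inr l) (.inr q) := by
  funext z
  by_cases hl : z = .inr l
  · subst hl
    obtain rfl | hlq := eq_or_ne l q
    · simp [bSwapRank]
    · simp [bSwapRank, htl.symm, htq.symm, hlq, hlq.symm]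
  by_cases hq : z = .inr q
  · subst hq; simp [bSwapRank, htl.symm, htq.symm]
  rw [Function.comp_apply, Equiv.swap_apply_of_ne_of_ne hl hq]
  rcases z with x | y
  · rfl
  · simp only [Sum.inr.injEq] at hl hq
    simp [bSwapRank, hl, hq]

theorem bSwapRank_adjacent (htl : t ≠ l) (htq : t ≠ q) (hlq : l ≠ q) :
    bSwapRank t l q (.inr q) = bSwapRank t l q (.inr l) + 1 := by
  simp [bSwapRank, htl.symm, htq.symm, hlq.symm]

end Ranks

section RankedFence

variable {m n : ℕ} (e : Fin m ⊕ Fin m ≃ Fin n)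

theorem fence_rankOrder (ρ : Fin m ⊕ Fin m → ℕ) :
    fence (e ∘ .inl) (e ∘ .inr) (chi (rankOrder e ρ)) =
      2 * ∑ l, (if ρ (.inl l) < ρ (.inr l) then 1 else 0) -
        ∑ l, ∑ q, if ρ (.inl l) < ρ (.inr q) then (1 : ℝ) else 0 := by
  simp [fence, chi, rankOrder]

theorem fence_rankOrder_of_lt_iff {ρ : Fin m ⊕ Fin m → ℕ} {t : Fin m}
    (h : ∀ l q, ρ (.inl l) < ρ (.inr q) ↔ l = t ∧ q = t) :
    fence (e ∘ .inl) (e ∘ .inr) (chi (rankOrder e ρ)) = 1 := by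
  rw [fence_rankOrder]
  simp only [h, and_self, ite_and, Finset.sum_ite_irrel, Finset.sum_ite_eq', Finset.mem_univ,
    if_true, Finset.sum_const_zero]
  norm_num

theorem fence_rankOrder_offRank {t s : Fin m} (hts : t ≠ s) :
    fence (e ∘ .inl) (e ∘ .inr) (chi (rankOrder e (offRank t s))) = 1 := by
  have hsplit : ∀ l q : Fin m, (if l = t ∧ (q = t ∨ q = s) ∨ l = s ∧ q = s then (1 : ℝ) else 0) =
      (if l = t ∧ q = t then 1 else 0) + (if l = t ∧ q = s then 1 else 0) +
        (if l = s ∧ q = s then 1 else 0) := by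
    intro l q
    by_cases hl : l = t <;> by_cases hq : q = t <;> simp [hl, hq, hts]
  rw [fence_rankOrder]
  simp only [offRank_lt_iff, hsplit, Finset.sum_add_distrib, ite_and, Finset.sum_ite_irrel,
    Finset.sum_ite_eq', Finset.mem_univ, if_true, Finset.sum_const_zero, if_neg hts]
  norm_num

theorem proj_chi_rankOrder_mem {ρ : Fin m ⊕ Fin m → ℕ} (hρ : Function.Injective ρ)
    (hf : fence (e ∘ .inl) (e ∘ .inr) (chi (rankOrder e ρ)) = 1) :
    proj (chi (rankOrder e ρ)) ∈ fenceTightPoints (e ∘ .inl) (e ∘ .inr) :=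
  ⟨_, isSTO_rankOrder e hρ, hf, rfl⟩

end RankedFence

section Pivots

variable {m : ℕ}

def abRanks (d l q : Fin m) : (Fin m ⊕ Fin m → ℕ) × (Fin m ⊕ Fin m → ℕ) :=
  if l = q then (diagRank l, diagRank d) else (offRank l q, diagRank l)

theorem abRanks_injective (d l q : Fin m) :
    Function.Injective (abRanks d l q).1 ∧ Function.Injective (abRanks d l q).2 := by
  unfold abRanks
  split_ifs
  · exact ⟨diagRank_injective l, diagRank_injective d⟩
  · exact ⟨offRank_injective l q, diagRank_injective l⟩

theorem fence_abRanks {n : ℕ} (e : Fin m ⊕ Fin m ≃ Fin n) (d l q : Fin m) :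
    fence (e ∘ .inl) (e ∘ .inr) (chi (rankOrder e (abRanks d l q).1)) = 1 ∧
      fence (e ∘ .inl) (e ∘ .inr) (chi (rankOrder e (abRanks d l q).2)) = 1 := by
  unfold abRanks
  split_ifs with h
  · exact ⟨fence_rankOrder_of_lt_iff e (diagRank_lt_iff l),
      fence_rankOrder_of_lt_iff e (diagRank_lt_iff d)⟩
  · exact ⟨fence_rankOrder_offRank e h, fence_rankOrder_of_lt_iff e (diagRank_lt_iff l)⟩

theorem sameOrder_abRanks {d l' q' l q : Fin m} (hne : ¬(l = l' ∧ q = q'))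
    (hd : ¬(l = d ∧ q = d)) (hlev : l = q → l' = q') :
    SameOrder (abRanks d l' q').1 (abRanks d l' q').2 (.inl l) (.inr q) := by
  unfold abRanks SameOrder
  split_ifs with h
  · subst h; simp only [diagRank_lt_iff]; tauto
  · simp only [offRank_lt_iff, diagRank_lt_iff]
    have : l ≠ q := fun hlq => h (hlev hlq)
    grind

theorem not_sameOrder_abRanks {d l q : Fin m} (hd : ¬(l = d ∧ q = d)) :
    ¬SameOrder (abRanks d l q).1 (abRanks d l q).2 (.inl l) (.inr q) := by
  unfold abRanks SameOrder
  split_ifs with h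
  · subst h; simp only [diagRank_lt_iff]; tauto
  · simp only [offRank_lt_iff, diagRank_lt_iff]; tauto

variable (t : Fin m → Fin m → Fin m) (d : Fin m)

-- `t l q` is meant to be an index other than `l` and `q`; `{a d, b d}` gets no pivot.
def pivotRanks : Fin m ⊕ Fin m → Fin m ⊕ Fin m → (Fin m ⊕ Fin m → ℕ) × (Fin m ⊕ Fin m → ℕ)
  | .inl l, .inl q => (aSwapRank (t l q) l q, aSwapRank (t l q) q l)
  | .inr l, .inr q => (bSwapRank (t l q) l q, bSwapRank (t l q) q l)
  | .inl l, .inr q | .inr q, .inl l => abRanks d l q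

def pivotLevel : Fin m ⊕ Fin m → Fin m ⊕ Fin m → ℕ
  | .inl l, .inr q | .inr q, .inl l => if l = q then 1 else 0
  | _, _ => 2

theorem pivotRanks_injective (x y : Fin m ⊕ Fin m) :
    Function.Injective (pivotRanks t d x y).1 ∧ Function.Injective (pivotRanks t d x y).2 := by
  rcases x with l | l <;> rcases y with q | q
  · exact ⟨aSwapRank_injective _ _ _, aSwapRank_injective _ _ _⟩
  · exact abRanks_injective d l q
  · exact abRanks_injective d q l
  · exact ⟨bSwapRank_injective _ _ _, bSwapRank_injective _ _ _⟩

theorem fence_pivotRanks {n : ℕ} (e : Fin m ⊕ Fin m ≃ Fin n) (x y : Fin m ⊕ Fin m) :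
    fence (e ∘ .inl) (e ∘ .inr) (chi (rankOrder e (pivotRanks t d x y).1)) = 1 ∧
      fence (e ∘ .inl) (e ∘ .inr) (chi (rankOrder e (pivotRanks t d x y).2)) = 1 := by
  rcases x with l | l <;> rcases y with q | q
  · exact ⟨fence_rankOrder_of_lt_iff e (aSwapRank_lt_iff _ _ _),
      fence_rankOrder_of_lt_iff e (aSwapRank_lt_iff _ _ _)⟩
  · exact fence_abRanks e d l q
  · exact fence_abRanks e d q l
  · exact ⟨fence_rankOrder_of_lt_iff e (bSwapRank_lt_iff _ _ _),
      fence_rankOrder_of_lt_iff e (bSwapRank_lt_iff _ _ _)⟩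

variable {t d}

theorem not_sameOrder_pivotRanks (ht : ∀ l q, t l q ≠ l ∧ t l q ≠ q) {x y : Fin m ⊕ Fin m}
    (hxy : x ≠ y) (hd : s(x, y) ≠ s(.inl d, .inr d)) :
    ¬SameOrder (pivotRanks t d x y).1 (pivotRanks t d x y).2 x y := by
  have hinj := pivotRanks_injective t d x y
  rcases x with l | l <;> rcases y with q | q
  · dsimp only [pivotRanks]
    rw [aSwapRank_swap (ht l q).1 (ht l q).2]
    exact not_sameOrder_comp_swap (aSwapRank_injective _ _ _) hxy
  · exact not_sameOrder_abRanks (by simpa using hd)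
  · rw [SameOrder.comm hinj.1 hinj.2 hxy]
    exact not_sameOrder_abRanks (by simpa [Sym2.eq_swap] using hd)
  · dsimp only [pivotRanks]
    rw [bSwapRank_swap (ht l q).1 (ht l q).2]
    exact not_sameOrder_comp_swap (bSwapRank_injective _ _ _) hxy

theorem sameOrder_abRanks_of_level {l' q' : Fin m} {x y : Fin m ⊕ Fin m} (hxy : x ≠ y)
    (hne : s(x, y) ≠ s(.inl l', .inr q')) (hd : s(x, y) ≠ s(.inl d, .inr d))
    (hlev : pivotLevel x y ≤ pivotLevel (.inl l') (.inr q')) :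
    SameOrder (abRanks d l' q').1 (abRanks d l' q').2 x y := by
  have hinj := abRanks_injective d l' q'
  have hlev' : pivotLevel (.inl l') (.inr q') ≤ 1 := by
    simp only [pivotLevel]; split_ifs <;> omega
  rcases x with l | l <;> rcases y with q | q
  · exact absurd (hlev.trans hlev') (by simp [pivotLevel])
  · refine sameOrder_abRanks (by simpa using hne) (by simpa using hd) fun hlq => ?_
    by_contra h
    simp [pivotLevel, hlq, h] at hlev
  · rw [SameOrder.comm hinj.1 hinj.2 hxy]
    refine sameOrder_abRanks (by simpa [Sym2.eq_swap] using hne)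
      (by simpa [Sym2.eq_swap] using hd) fun hlq => ?_
    by_contra h
    simp [pivotLevel, hlq, h] at hlev
  · exact absurd (hlev.trans hlev') (by simp [pivotLevel])

theorem sameOrder_pivotRanks (ht : ∀ l q, t l q ≠ l ∧ t l q ≠ q) {x y x' y' : Fin m ⊕ Fin m}
    (hxy : x ≠ y) (hxy' : x' ≠ y') (hne : s(x, y) ≠ s(x', y'))
    (hd : s(x, y) ≠ s(.inl d, .inr d)) (hlev : pivotLevel x y ≤ pivotLevel x' y') :
    SameOrder (pivotRanks t d x' y').1 (pivotRanks t d x' y').2 x y := by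
  rcases x' with l' | l' <;> rcases y' with q' | q'
  · have hlq : l' ≠ q' := fun h => hxy' (congrArg _ h)
    dsimp only [pivotRanks]
    rw [aSwapRank_swap (ht l' q').1 (ht l' q').2]
    exact sameOrder_comp_swap (aSwapRank_injective _ _ _)
      (aSwapRank_adjacent (ht l' q').1 (ht l' q').2 hlq) hne
  · exact sameOrder_abRanks_of_level hxy hne hd hlev
  · exact sameOrder_abRanks_of_level hxy (fun h => hne (h.trans Sym2.eq_swap)) hd hlev
  · have hlq : l' ≠ q' := fun h => hxy' (congrArg _ h)
    dsimp only [pivotRanks]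
    rw [bSwapRank_swap (ht l' q').1 (ht l' q').2]
    exact sameOrder_comp_swap (bSwapRank_injective _ _ _)
      (bSwapRank_adjacent (ht l' q').1 (ht l' q').2 hlq) hne

end Pivots

section Facet

variable {m n : ℕ} (e : Fin m ⊕ Fin m ≃ Fin n)

theorem pair_eq_of_symm_sym2_eq {p p' : {p : Fin n × Fin n // p.1 < p.2}}
    (h : s(e.symm p.1.1, e.symm p.1.2) = s(e.symm p'.1.1, e.symm p'.1.2)) : p = p' := by
  have h' := congrArg (Sym2.map e) h
  simp only [Sym2.map_mk, Equiv.apply_symm_apply] at h'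
  rcases Sym2.eq_iff.mp h' with ⟨h₁, h₂⟩ | ⟨h₁, h₂⟩
  · exact Subtype.ext (Prod.ext h₁ h₂)
  · exact absurd (p.2.trans (h₂ ▸ h₁ ▸ p'.2)) (lt_irrefl _)

theorem exists_pair_symm_sym2_eq (x y : Fin m ⊕ Fin m) (hxy : x ≠ y) :
    ∃ p : {p : Fin n × Fin n // p.1 < p.2}, s(e.symm p.1.1, e.symm p.1.2) = s(x, y) := by
  rcases lt_or_gt_of_ne (e.injective.ne hxy) with h | h
  · exact ⟨⟨(e x, e y), h⟩, by simp⟩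
  · exact ⟨⟨(e y, e x), h⟩, by simp [Sym2.eq_swap]⟩

theorem finrank_vectorSpan_fenceTightPoints_le (hm : 0 < m) :
    Module.finrank ℝ (vectorSpan ℝ (fenceTightPoints (e ∘ .inl) (e ∘ .inr))) ≤
      Fintype.card {p : Fin n × Fin n // p.1 < p.2} - 1 := by
  set L := fenceLinear (e ∘ .inl) (e ∘ .inr) ∘ₗ skewLift
  have hL : ∀ ρ, Function.Injective ρ → L (proj (chi (rankOrder e ρ))) =
      fence (e ∘ .inl) (e ∘ .inr) (chi (rankOrder e ρ)) -
        fence (e ∘ .inl) (e ∘ .inr) (chi (fun u v => v < u)) := by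
    intro ρ hρ
    simp only [L, LinearMap.comp_apply, skewLift_proj_chi (isSTO_rankOrder e hρ), map_sub]
    rfl
  have hL0 : L ≠ 0 := by
    intro h0
    let ρ := Sum.elim (fun l : Fin m => m + (l : ℕ)) (fun q : Fin m => (q : ℕ))
    have hρ : Function.Injective ρ := by
      rintro (x | x) (y | y) h <;> simp only [ρ, Sum.elim_inl, Sum.elim_inr] at h <;>
        simp only [Fin.ext_iff, Sum.inl.injEq, Sum.inr.injEq, reduceCtorEq] <;> omega
    have h1 := hL _ (diagRank_injective ⟨0, hm⟩)
    have h2 := hL ρ hρ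
    rw [h0, LinearMap.zero_apply, fence_rankOrder_of_lt_iff e (diagRank_lt_iff _)] at h1
    rw [h0, LinearMap.zero_apply, fence_rankOrder] at h2
    have hlt : ∀ l q : Fin m, ¬ρ (.inl l) < ρ (.inr q) := fun l q => by simp [ρ]; omega
    simp only [hlt, if_false, Finset.sum_const_zero, mul_zero, sub_zero] at h2
    linarith
  have hker := Module.Dual.finrank_ker_add_one_of_ne_zero hL0
  rw [Module.finrank_fintype_fun_eq_card] at hker
  calc _ ≤ Module.finrank ℝ (LinearMap.ker L) := Submodule.finrank_mono (vectorSpan_le_ker _ 1)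
    _ = _ := by omega

theorem card_sub_one_le_finrank_vectorSpan_fenceTightPoints (hm : 3 ≤ m) :
    Fintype.card {p : Fin n × Fin n // p.1 < p.2} - 1 ≤
      Module.finrank ℝ (vectorSpan ℝ (fenceTightPoints (e ∘ .inl) (e ∘ .inr))) := by
  choose t ht using Fin.exists_ne_ne hm
  set d : Fin m := ⟨0, by omega⟩
  obtain ⟨p₀, hp₀⟩ := exists_pair_symm_sym2_eq e (.inl d) (.inr d) Sum.inl_ne_inr
  have hpair : ∀ p : {p : Fin n × Fin n // p.1 < p.2}, e.symm p.1.1 ≠ e.symm p.1.2 :=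
    fun p => e.symm.injective.ne p.2.ne
  have hbase : ∀ i : {p // p ≠ p₀}, s(e.symm i.1.1.1, e.symm i.1.1.2) ≠ s(.inl d, .inr d) :=
    fun i h => i.2 (pair_eq_of_symm_sym2_eq e (h.trans hp₀.symm))
  let ρs : {p : Fin n × Fin n // p.1 < p.2} → _ :=
    fun p => pivotRanks t d (e.symm p.1.1) (e.symm p.1.2)
  let v : {p // p ≠ p₀} → {p : Fin n × Fin n // p.1 < p.2} → ℝ :=
    fun i => proj (chi (rankOrder e (ρs i).1)) - proj (chi (rankOrder e (ρs i).2))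
  have hli : LinearIndependent ℝ v := by
    refine linearIndependent_of_triangular (fun i => LinearMap.proj i.1)
      (fun i => pivotLevel (e.symm i.1.1.1) (e.symm i.1.1.2)) (fun i => ?_)
      (fun i j hij hlev => ?_)
    · exact (proj_chi_rankOrder_sub_apply_eq_zero_iff e _ _ _).not.mpr
        (not_sameOrder_pivotRanks ht (hpair i) (hbase i))
    · exact (proj_chi_rankOrder_sub_apply_eq_zero_iff e _ _ _).mpr
        (sameOrder_pivotRanks ht (hpair i) (hpair j)
          (fun h => hij (Subtype.ext (pair_eq_of_symm_sym2_eq e h))) (hbase i) hlev)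
  have hmem : ∀ i, v i ∈ vectorSpan ℝ (fenceTightPoints (e ∘ .inl) (e ∘ .inr)) := fun i =>
    vsub_mem_vectorSpan ℝ
      (proj_chi_rankOrder_mem e (pivotRanks_injective t d _ _).1 (fence_pivotRanks t d e _ _).1)
      (proj_chi_rankOrder_mem e (pivotRanks_injective t d _ _).2 (fence_pivotRanks t d e _ _).2)
  calc Fintype.card {p : Fin n × Fin n // p.1 < p.2} - 1 = Fintype.card {p // p ≠ p₀} := by
        rw [Fintype.card_subtype_compl, Fintype.card_subtype_eq]
    _ = Module.finrank ℝ (Submodule.span ℝ (Set.range v)) := (finrank_span_eq_card hli).symm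
    _ ≤ _ := Submodule.finrank_mono (Submodule.span_le.mpr (Set.range_subset_iff.mpr hmem))

end Facet

theorem exists_sumEquiv {m : ℕ} {a b : Fin m → Fin (2 * m)} (ha : Function.Injective a)
    (hb : Function.Injective b) (hab : ∀ l q, a l ≠ b q) :
    ∃ e : Fin m ⊕ Fin m ≃ Fin (2 * m), a = e ∘ .inl ∧ b = e ∘ .inr :=
  ⟨Equiv.ofBijective (Sum.elim a b) ((Fintype.bijective_iff_injective_and_card _).2
    ⟨ha.sumElim hb hab, by simp [two_mul]⟩), rfl, rfl⟩

theorem fence_is_facet_general {m : ℕ} (hm : 3 ≤ m)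
    (a b : Fin m → Fin (2 * m))
    (ha : Function.Injective a) (hb : Function.Injective b)
    (hab : ∀ l q, a l ≠ b q) :
    (∀ r : Fin (2 * m) → Fin (2 * m) → Prop, IsSTO r → fence a b (chi r) ≤ 1) ∧
    Module.finrank ℝ
      (affineSpan ℝ
        {y : {p : Fin (2 * m) × Fin (2 * m) // p.1 < p.2} → ℝ |
          ∃ r : Fin (2 * m) → Fin (2 * m) → Prop,
            IsSTO r ∧ fence a b (chi r) = 1 ∧ y = proj (chi r)}).direction
      = (2 * m) * (2 * m - 1) / 2 - 1 := by
  obtain ⟨e, rfl, rfl⟩ := exists_sumEquiv ha hb hab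
  refine ⟨fun r hr => fence_chi_le_one _ _ hr, ?_⟩
  rw [direction_affineSpan, ← Fin.card_subtype_fst_lt_snd]
  exact le_antisymm (finrank_vectorSpan_fenceTightPoints_le e (by omega))
    (card_sub_one_le_finrank_vectorSpan_fenceTightPoints e hm)

theorem fence_is_facet {m : ℕ} (hm : 3 ≤ m)
    (a b : Fin m → Fin (2 * m))
    (ha : Function.Injective a) (hb : Function.Injective b)
    (hab : ∀ l q, a l ≠ b q)
    (hcov : ∀ u : Fin (2 * m), (∃ l, u = a l) ∨ (∃ l, u = b l)) :
    (∀ r : Fin (2 * m) → Fin (2 * m) → Prop, IsSTO r → fence a b (chi r) ≤ 1) ∧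
    Module.finrank ℝ
      (affineSpan ℝ
        {y : {p : Fin (2 * m) × Fin (2 * m) // p.1 < p.2} → ℝ |
          ∃ r : Fin (2 * m) → Fin (2 * m) → Prop,
            IsSTO r ∧ fence a b (chi r) = 1 ∧ y = proj (chi r)}).direction
      = (2 * m) * (2 * m - 1) / 2 - 1 :=
  fence_is_facet_general hm a b ha hb hab
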